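/- arXiv:1701.09163 — 3 statements merged into one kernel-verified Lean document; each statement's English description precedes it below -/
import Mathlib

section
/- For every integer N ≥ 1, every integer k and any α ∈ ℝ, the Weyl sum S = ∑_{n=1}^{N} e(k(n−α)²/(2N)) satisfies |S|² ≤ N·gcd(k,N) + 4 ∑_{1≤h<N, (N/gcd(k,N)) ∤ h} 1/|1 − e(kh/N)|, where e(x) = exp(2πi x). -/
open Finset Complex

noncomputable def e (t : ℝ) : ℂ := Complex.exp (2 * Real.pi * Complex.I * t)

lemma e_add (s t : ℝ) : e (s + t) = e s * e t := by
  simp [e, mul_add, Complex.exp_add]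

lemma abs_e (t : ℝ) : ‖e t‖ = 1 := by
  simp [e, Complex.norm_exp]

lemma conj_e (t : ℝ) : (starRingEnd ℂ) (e t) = e (-t) := by
  rw [e, e, ← Complex.exp_conj]
  congr 1
  simp only [map_mul, Complex.conj_I, Complex.conj_ofReal, map_ofNat]
  push_cast
  ring

lemma e_int (n : ℤ) : e n = 1 := by
  rw [e]
  have : 2 * (Real.pi:ℂ) * Complex.I * (n:ℝ) = n * (2 * Real.pi * Complex.I) := by
    push_cast; ring
  rw [this, Complex.exp_int_mul_two_pi_mul_I]

lemma e_int_mul (m : ℤ) (t : ℝ) : e ((m:ℝ) * t) = e t ^ m := by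
  rw [e, e, ← Complex.exp_int_mul]
  congr 1
  push_cast; ring

lemma geom_Icc_bound (z : ℂ) (hz : ‖z‖ = 1) (h1 : z ≠ 1) (a b : ℤ) :
    ‖∑ m ∈ Finset.Icc a b, z ^ m‖ ≤ 2 / ‖1 - z‖ := by
  have hz0 : z ≠ 0 := by
    intro h; rw [h] at hz; simp at hz
  have hz1 : (1:ℂ) - z ≠ 0 := sub_ne_zero.mpr (Ne.symm h1)
  have habs : 0 < ‖1 - z‖ := by
    exact norm_pos_iff.mpr hz1
  by_cases hab : a ≤ b
  · set n : ℕ := (b + 1 - a).toNat with hn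
    have hre : ∑ m ∈ Finset.Icc a b, z ^ m = z ^ a * ∑ i ∈ Finset.range n, z ^ i := by
      rw [Finset.mul_sum]
      apply Finset.sum_nbij' (fun m => (m - a).toNat) (fun i => a + i)
      · intro m hm; simp [Finset.mem_Icc] at hm; simp [hn]; omega
      · intro i hi; simp [hn] at hi; simp [Finset.mem_Icc]; omega
      · intro m hm; simp [Finset.mem_Icc] at hm; omega
      · intro i hi; simp
      · intro m hm
        simp [Finset.mem_Icc] at hm
        rw [← zpow_natCast z, ← zpow_add₀ hz0]
        congr 1
        omega
    rw [hre, norm_mul, geom_sum_eq h1, norm_div]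
    have h1' : ‖z ^ a‖ = 1 := by rw [norm_zpow, hz, one_zpow]
    rw [h1']
    have h2 : ‖z ^ n - 1‖ ≤ 2 := by
      calc ‖z ^ n - 1‖ ≤ ‖z ^ n‖ + ‖(1:ℂ)‖ :=
            norm_sub_le _ _
        _ = 2 := by rw [norm_pow, hz]; norm_num
    rw [one_mul]
    have : ‖z - 1‖ = ‖1 - z‖ := norm_sub_rev _ _
    rw [this]
    gcongr
  · rw [Finset.Icc_eq_empty hab, Finset.sum_empty, norm_zero]
    positivity

lemma sum_abs_Icc (a : ℕ) : ∑ j ∈ Finset.Icc (-(a:ℤ)) (a:ℤ), |j| = (a:ℤ) * (a + 1) := by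
  induction a with
  | zero => simp
  | succ n ih =>
    have hs : Finset.Icc (-((n:ℤ)+1)) ((n:ℤ)+1)
        = insert (-((n:ℤ)+1)) (insert ((n:ℤ)+1) (Finset.Icc (-(n:ℤ)) (n:ℤ))) := by
      ext x; simp [Finset.mem_Icc]; omega
    push_cast
    rw [hs, Finset.sum_insert, Finset.sum_insert, ih]
    · have h1 : |(-((n:ℤ) + 1))| = (n:ℤ) + 1 := by rw [abs_of_nonpos] <;> omega
      have h2 : |(n:ℤ) + 1| = (n:ℤ) + 1 := by rw [_root_.abs_of_nonneg]; omega
      rw [h1, h2]; ring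
    · simp [Finset.mem_Icc]
    · simp [Finset.mem_Icc]; omega

lemma count_div (N d q : ℕ) (hd : 1 ≤ d) (hq : 1 ≤ q) (hN : (N:ℤ) = q * d) :
    ∑ h ∈ (Finset.Icc (1-(N:ℤ)) ((N:ℤ)-1)).filter (fun h => (q:ℤ) ∣ h), ((N:ℤ) - |h|)
      = N * d := by
  obtain ⟨a, rfl⟩ : ∃ a, d = a + 1 := ⟨d - 1, by omega⟩
  have hq' : (1:ℤ) ≤ (q:ℤ) := by exact_mod_cast hq
  have hq0 : (q:ℤ) ≠ 0 := by omega
  have hNe : (N:ℤ) = (q:ℤ) * a + q := by push_cast at hN ⊢; linarith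
  have hstep : ∑ h ∈ (Finset.Icc (1-(N:ℤ)) ((N:ℤ)-1)).filter (fun h => (q:ℤ) ∣ h), ((N:ℤ) - |h|)
      = ∑ j ∈ Finset.Icc (-(a:ℤ)) (a:ℤ), ((N:ℤ) - |j| * q) := by
    refine Finset.sum_nbij' (i := fun h : ℤ => h / q) (j := fun j : ℤ => j * q) ?_ ?_ ?_ ?_ ?_
    · intro h hh
      simp only [Finset.mem_filter, Finset.mem_Icc] at hh
      obtain ⟨⟨h1, h2⟩, t, rfl⟩ := hh
      show ((q:ℤ) * t) / q ∈ Finset.Icc (-(a:ℤ)) (a:ℤ)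
      rw [Int.mul_ediv_cancel_left _ hq0]
      simp only [Finset.mem_Icc]
      constructor <;> nlinarith
    · intro j hj
      simp only [Finset.mem_Icc] at hj
      obtain ⟨h1, h2⟩ := hj
      simp only [Finset.mem_filter, Finset.mem_Icc]
      refine ⟨⟨?_, ?_⟩, dvd_mul_left _ _⟩ <;>
        nlinarith [mul_nonneg (by linarith : (0:ℤ) ≤ (q:ℤ)) (by linarith : (0:ℤ) ≤ j + a),
          mul_nonneg (by linarith : (0:ℤ) ≤ (q:ℤ)) (by linarith : (0:ℤ) ≤ (a:ℤ) - j)]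
    · intro h hh
      simp only [Finset.mem_filter, Finset.mem_Icc] at hh
      exact Int.ediv_mul_cancel hh.2
    · intro j hj
      exact Int.mul_ediv_cancel _ hq0
    · intro h hh
      simp only [Finset.mem_filter, Finset.mem_Icc] at hh
      obtain ⟨⟨h1, h2⟩, t, rfl⟩ := hh
      show (N:ℤ) - |(q:ℤ) * t| = (N:ℤ) - |((q:ℤ) * t) / q| * q
      rw [Int.mul_ediv_cancel_left _ hq0]
      rw [abs_mul, _root_.abs_of_nonneg (by positivity : (0:ℤ) ≤ (q:ℤ))]
      ring
  rw [hstep, Finset.sum_sub_distrib, Finset.sum_const, ← Finset.sum_mul, sum_abs_Icc,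
    Int.card_Icc]
  have hcard : ((a:ℤ) + 1 - -(a:ℤ)).toNat = 2 * a + 1 := by omega
  rw [hcard, nsmul_eq_mul]
  push_cast
  push_cast at hNe
  nlinarith [hNe]

lemma reindex (N : ℕ) (g : ℤ → ℤ → ℂ) :
    ∑ n ∈ Finset.Icc (1:ℤ) (N:ℤ), ∑ m ∈ Finset.Icc (1:ℤ) (N:ℤ), g n m
      = ∑ h ∈ Finset.Icc (1 - (N:ℤ)) ((N:ℤ) - 1),
          ∑ m ∈ Finset.Icc (max 1 (1 - h)) (min (N:ℤ) ((N:ℤ) - h)), g (m + h) m := by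
  rw [← Finset.sum_product']
  conv_rhs => rw [Finset.sum_sigma']
  refine Finset.sum_nbij' (i := fun p => (⟨p.1 - p.2, p.2⟩ : Σ _ : ℤ, ℤ))
    (j := fun q => ((q.2 + q.1, q.2) : ℤ × ℤ)) ?_ ?_ ?_ ?_ ?_
  · intro p hp
    simp only [Finset.mem_product, Finset.mem_Icc] at hp
    simp only [Finset.mem_sigma, Finset.mem_Icc, le_max_iff, max_le_iff, le_min_iff, min_le_iff]
    omega
  · intro q hq
    simp only [Finset.mem_sigma, Finset.mem_Icc, le_max_iff, max_le_iff, le_min_iff,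
      min_le_iff] at hq
    simp only [Finset.mem_product, Finset.mem_Icc]
    omega
  · intro p hp; simp
  · intro q hq; simp
  · intro p hp; simp

lemma natToInt (N : ℕ) (f : ℝ → ℂ) :
    ∑ n ∈ Finset.Icc 1 N, f (n : ℝ) = ∑ n ∈ Finset.Icc (1:ℤ) (N:ℤ), f ((n : ℤ) : ℝ) := by
  refine Finset.sum_nbij' (i := fun n : ℕ => (n : ℤ)) (j := fun n : ℤ => n.toNat) ?_ ?_ ?_ ?_ ?_
  · intro n hn; simp [Finset.mem_Icc] at hn ⊢; omega
  · intro n hn; simp [Finset.mem_Icc] at hn ⊢; omega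
  · intro n hn; simp
  · intro n hn; simp [Finset.mem_Icc] at hn; simp; omega
  · intro n hn; simp

lemma e_eq_one_imp (N : ℕ) (hN : 1 ≤ N) (k h : ℤ)
    (he : e ((k:ℝ) * (h:ℝ) / (N:ℝ)) = 1) : (N:ℤ) ∣ k * h := by
  rw [e, Complex.exp_eq_one_iff] at he
  obtain ⟨n, hn⟩ := he
  have h2pi : (2 * (Real.pi:ℂ) * Complex.I) ≠ 0 := by
    simp [Real.pi_ne_zero, Complex.I_ne_zero]
  have hx : ((k:ℝ) * h / N : ℝ) = (n : ℝ) := by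
    have h' : (2 * (Real.pi:ℂ) * Complex.I) * ((k:ℝ) * h / N : ℝ)
        = (2 * (Real.pi:ℂ) * Complex.I) * (n:ℂ) := by rw [hn]; ring
    have := mul_left_cancel₀ h2pi h'
    exact_mod_cast this
  have hNR : (N:ℝ) ≠ 0 := by positivity
  have hch : ((k * h : ℤ) : ℝ) = ((n * N : ℤ) : ℝ) := by
    push_cast
    field_simp at hx
    linarith [hx]
  have := Int.cast_injective (α := ℝ) hch
  exact ⟨n, by linarith [this]⟩

lemma div_trans (N : ℕ) (hN : 1 ≤ N) (k h : ℤ) (hdvd : (N:ℤ) ∣ k * h) :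
    ((N / k.gcd N : ℕ) : ℤ) ∣ h := by
  set d := k.gcd N with hd
  have hd0 : 0 < d := by
    rw [hd]
    refine Int.gcd_pos_of_ne_zero_right k ?_
    exact_mod_cast Nat.one_le_iff_ne_zero.mp hN
  have hdN : (d:ℤ) ∣ (N:ℤ) := Int.gcd_dvd_right _ _
  have hdk : (d:ℤ) ∣ k := Int.gcd_dvd_left _ _
  have hco : Int.gcd (k / d) ((N:ℤ) / d) = 1 := Int.gcd_div_gcd_div_gcd hd0
  have hq : ((N / d : ℕ) : ℤ) = (N:ℤ) / d := Int.ofNat_ediv_ofNat.symm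
  rw [hq]
  have hdvd' : (N:ℤ) / d ∣ (k / d) * h := by
    obtain ⟨s, hs⟩ := hdvd
    obtain ⟨k', hk'⟩ := hdk
    obtain ⟨N', hN'⟩ := hdN
    have hd0' : (d:ℤ) ≠ 0 := by exact_mod_cast hd0.ne'
    refine ⟨s, ?_⟩
    rw [hk', hN'] at hs ⊢
    rw [Int.mul_ediv_cancel_left _ hd0', Int.mul_ediv_cancel_left _ hd0']
    have : (d:ℤ) * (k' * h) = (d:ℤ) * (N' * s) := by linarith [hs]
    exact mul_left_cancel₀ hd0' this
  exact Int.dvd_of_dvd_mul_right_of_gcd_one hdvd' (by rw [Int.gcd_comm]; exact hco)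

/-- Weyl differencing bound for the quadratic exponential sum
`S = ∑_{n=1}^N e(k(n-α)²/(2N))`. -/
theorem weyl_differencing_bound (N : ℕ) (hN : 1 ≤ N) (k : ℤ) (α : ℝ) :
    ‖∑ n ∈ Finset.Icc 1 N,
        e ((k : ℝ) * ((n : ℝ) - α) ^ 2 / (2 * N))‖ ^ 2
      ≤ (N : ℝ) * (k.gcd N) +
        4 * ∑ h ∈ (Finset.Ico 1 N).filter (fun h => ¬ ((N / k.gcd N) ∣ h)),
            1 / ‖1 - e ((k : ℝ) * h / N)‖ := by
  have hNR : (N:ℝ) ≠ 0 := by positivity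
  set d := k.gcd N with hd
  have hd0 : 0 < d := by
    rw [hd]
    exact Int.gcd_pos_of_ne_zero_right k (by exact_mod_cast Nat.one_le_iff_ne_zero.mp hN)
  have hdN : d ∣ N := by
    have : (d:ℤ) ∣ (N:ℤ) := hd ▸ Int.gcd_dvd_right _ _
    exact_mod_cast this
  set q := N / d with hq
  have hq0 : 0 < q := Nat.div_pos (Nat.le_of_dvd (by omega) hdN) hd0
  have hNqd : (N:ℤ) = (q:ℤ) * (d:ℤ) := by
    rw [hq]
    exact_mod_cast (Nat.div_mul_cancel hdN).symm
  -- abbreviations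
  set H := Finset.Icc (1 - (N:ℤ)) ((N:ℤ) - 1) with hH
  set I : ℤ → Finset ℤ := fun h => Finset.Icc (max 1 (1 - h)) (min (N:ℤ) ((N:ℤ) - h)) with hI
  set z : ℤ → ℂ := fun h => e ((k:ℝ) * ((h:ℤ):ℝ) / N) with hz
  set A : ℤ → ℝ := fun h => ‖∑ m ∈ I h, z h ^ m‖ with hA
  set S : ℂ := ∑ n ∈ Finset.Icc (1:ℤ) (N:ℤ), e ((k:ℝ) * (((n:ℤ):ℝ) - α)^2 / (2*N)) with hS
  have h0 : ∑ n ∈ Finset.Icc 1 N, e ((k : ℝ) * ((n : ℝ) - α) ^ 2 / (2 * N)) = S :=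
    natToInt N (fun x => e ((k:ℝ) * (x - α)^2 / (2*N)))
  rw [h0]
  have h1 : ‖S‖ ^ 2 = ‖S * (starRingEnd ℂ) S‖ := by
    rw [norm_mul, Complex.norm_conj, sq]
  rw [h1]
  -- expand the square into the differenced form
  have h2 : S * (starRingEnd ℂ) S
      = ∑ h ∈ H, (e ((k:ℝ) * ((h:ℤ):ℝ)^2 / (2*N) - (k:ℝ) * ((h:ℤ):ℝ) * α / N)
          * ∑ m ∈ I h, z h ^ m) := by
    have hconj : (starRingEnd ℂ) S
        = ∑ m ∈ Finset.Icc (1:ℤ) (N:ℤ), e (-((k:ℝ) * (((m:ℤ):ℝ) - α)^2 / (2*N))) := by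
      rw [hS, map_sum]
      exact Finset.sum_congr rfl fun m _ => conj_e _
    rw [hconj, hS, Finset.sum_mul_sum]
    have hgg : ∀ n m : ℤ, e ((k:ℝ) * ((n:ℝ) - α)^2 / (2*N))
        * e (-((k:ℝ) * ((m:ℝ) - α)^2 / (2*N)))
        = e ((k:ℝ) * ((n:ℝ) - α)^2 / (2*N) - (k:ℝ) * ((m:ℝ) - α)^2 / (2*N)) := by
      intro n m
      rw [← e_add]
      congr 1
    calc ∑ n ∈ Finset.Icc (1:ℤ) (N:ℤ), ∑ m ∈ Finset.Icc (1:ℤ) (N:ℤ),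
          e ((k:ℝ) * ((n:ℝ) - α)^2 / (2*N)) * e (-((k:ℝ) * ((m:ℝ) - α)^2 / (2*N)))
        = ∑ n ∈ Finset.Icc (1:ℤ) (N:ℤ), ∑ m ∈ Finset.Icc (1:ℤ) (N:ℤ),
          e ((k:ℝ) * ((n:ℝ) - α)^2 / (2*N) - (k:ℝ) * ((m:ℝ) - α)^2 / (2*N)) := by
          exact Finset.sum_congr rfl fun n _ => Finset.sum_congr rfl fun m _ => hgg n m
      _ = ∑ h ∈ H, ∑ m ∈ I h,
          e ((k:ℝ) * (((m + h : ℤ):ℝ) - α)^2 / (2*N) - (k:ℝ) * ((m:ℝ) - α)^2 / (2*N)) := by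
          rw [hH, hI]
          exact reindex N (fun n m => e ((k:ℝ) * ((n:ℝ) - α)^2 / (2*N)
            - (k:ℝ) * ((m:ℝ) - α)^2 / (2*N)))
      _ = ∑ h ∈ H, (e ((k:ℝ) * ((h:ℤ):ℝ)^2 / (2*N) - (k:ℝ) * ((h:ℤ):ℝ) * α / N)
          * ∑ m ∈ I h, z h ^ m) := by
          refine Finset.sum_congr rfl fun h _ => ?_
          rw [Finset.mul_sum]
          refine Finset.sum_congr rfl fun m _ => ?_
          rw [hz, ← e_int_mul, ← e_add]
          congr 1
          push_cast
          field_simp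
          ring_nf
  rw [h2]
  -- bound by the sum of absolute values
  have h3 : ‖∑ h ∈ H, (e ((k:ℝ) * ((h:ℤ):ℝ)^2 / (2*N) - (k:ℝ) * ((h:ℤ):ℝ) * α / N)
          * ∑ m ∈ I h, z h ^ m)‖ ≤ ∑ h ∈ H, A h := by
    refine (norm_sum_le _ _).trans (le_of_eq ?_)
    refine Finset.sum_congr rfl fun h _ => ?_
    rw [norm_mul, abs_e, one_mul, hA]
  refine h3.trans ?_
  -- split into divisible and non-divisible h
  rw [← Finset.sum_filter_add_sum_filter_not H (fun h => (q:ℤ) ∣ h)]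
  have habsz : ∀ h : ℤ, ‖z h‖ = 1 := fun h => abs_e _
  -- divisible part
  have hdiv : ∑ h ∈ H.filter (fun h => (q:ℤ) ∣ h), A h ≤ (N:ℝ) * d := by
    have hbound : ∀ h ∈ H.filter (fun h => (q:ℤ) ∣ h), A h ≤ (((N:ℤ) - |h| : ℤ) : ℝ) := by
      intro h hh
      simp only [Finset.mem_filter, hH, Finset.mem_Icc] at hh
      obtain ⟨⟨hh1, hh2⟩, -⟩ := hh
      have hcard : A h ≤ ((I h).card : ℝ) := by
        rw [hA]
        refine (norm_sum_le _ _).trans (le_of_eq ?_)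
        rw [Finset.sum_congr rfl fun m _ => ?_, Finset.sum_const, nsmul_eq_mul, mul_one]
        rw [norm_zpow, habsz, one_zpow]
      refine hcard.trans ?_
      have : ((I h).card : ℤ) ≤ (N:ℤ) - |h| := by
        have hIh : I h = Finset.Icc (max 1 (1 - h)) (min (N:ℤ) ((N:ℤ) - h)) := by rw [hI]
        rw [hIh, Int.card_Icc]
        have l1 : (1:ℤ) ≤ max 1 (1 - h) := le_max_left _ _
        have l2 : (1:ℤ) - h ≤ max 1 (1 - h) := le_max_right _ _
        have l3 : min (N:ℤ) ((N:ℤ) - h) ≤ N := min_le_left _ _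
        have l4 : min (N:ℤ) ((N:ℤ) - h) ≤ (N:ℤ) - h := min_le_right _ _
        rcases abs_cases h with ⟨he, _⟩ | ⟨he, _⟩ <;> rw [he] <;> omega
      exact_mod_cast this
    calc ∑ h ∈ H.filter (fun h => (q:ℤ) ∣ h), A h
        ≤ ∑ h ∈ H.filter (fun h => (q:ℤ) ∣ h), (((N:ℤ) - |h| : ℤ) : ℝ) :=
          Finset.sum_le_sum hbound
      _ = (((∑ h ∈ H.filter (fun h => (q:ℤ) ∣ h), ((N:ℤ) - |h|)) : ℤ) : ℝ) := by
          push_cast; rfl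
      _ = (N:ℝ) * d := by
          rw [hH, count_div N d q hd0 hq0 hNqd]
          push_cast; ring
  -- non-divisible part
  have hnondiv : ∑ h ∈ H.filter (fun h => ¬ (q:ℤ) ∣ h), A h
      ≤ 4 * ∑ h ∈ (Finset.Ico 1 N).filter (fun h => ¬ (q ∣ h)),
          1 / ‖1 - e ((k : ℝ) * (h:ℕ) / N)‖ := by
    set B : ℤ → ℝ := fun h => 2 / ‖1 - z h‖ with hB
    have hzne : ∀ h : ℤ, ¬ (q:ℤ) ∣ h → z h ≠ 1 := by
      intro h hnd heq
      apply hnd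
      have h1 : (N:ℤ) ∣ k * h := e_eq_one_imp N hN k h (by rw [hz] at heq; exact_mod_cast heq)
      have h2 := div_trans N hN k h h1
      rw [← hd, ← hq] at h2
      exact h2
    have hAB : ∀ h ∈ H.filter (fun h => ¬ (q:ℤ) ∣ h), A h ≤ B h := by
      intro h hh
      simp only [Finset.mem_filter] at hh
      have hne := hzne h hh.2
      have hIh : I h = Finset.Icc (max 1 (1 - h)) (min (N:ℤ) ((N:ℤ) - h)) := by rw [hI]
      show ‖∑ m ∈ I h, z h ^ m‖ ≤ 2 / ‖1 - z h‖
      rw [hIh]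
      exact geom_Icc_bound (z h) (abs_e _) hne _ _
    refine (Finset.sum_le_sum hAB).trans ?_
    have hsplit : H.filter (fun h => ¬ (q:ℤ) ∣ h)
        = ((Finset.Icc (1-(N:ℤ)) (-1)).filter (fun h => ¬ (q:ℤ) ∣ h))
          ∪ ((Finset.Icc (1:ℤ) ((N:ℤ)-1)).filter (fun h => ¬ (q:ℤ) ∣ h)) := by
      ext x
      simp only [Finset.mem_union, Finset.mem_filter, hH, Finset.mem_Icc]
      by_cases hx : (q:ℤ) ∣ x
      · simp [hx]
      · have hx0 : x ≠ 0 := fun h0 => hx (h0 ▸ dvd_zero _)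
        simp only [hx, not_false_iff, and_true]
        omega
    have hdisj : Disjoint ((Finset.Icc (1-(N:ℤ)) (-1)).filter (fun h => ¬ (q:ℤ) ∣ h))
        ((Finset.Icc (1:ℤ) ((N:ℤ)-1)).filter (fun h => ¬ (q:ℤ) ∣ h)) := by
      refine Finset.disjoint_filter_filter ?_
      rw [Finset.disjoint_left]
      intro x hx1 hx2
      simp only [Finset.mem_Icc] at hx1 hx2
      omega
    rw [hsplit, Finset.sum_union hdisj]
    have hBneg : ∀ h : ℤ, B (-h) = B h := by
      intro h
      have hzc : z (-h) = (starRingEnd ℂ) (z h) := by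
        rw [hz]
        simp only []
        rw [conj_e]
        congr 1
        push_cast
        ring
      rw [hB]
      simp only []
      rw [hzc]
      have : (1:ℂ) - (starRingEnd ℂ) (z h) = (starRingEnd ℂ) (1 - z h) := by
        rw [map_sub, map_one]
      rw [this, Complex.norm_conj]
    have hnegpos : ∑ h ∈ (Finset.Icc (1-(N:ℤ)) (-1)).filter (fun h => ¬ (q:ℤ) ∣ h), B h
        = ∑ h ∈ (Finset.Icc (1:ℤ) ((N:ℤ)-1)).filter (fun h => ¬ (q:ℤ) ∣ h), B h := by
      refine Finset.sum_nbij' (i := fun h : ℤ => -h) (j := fun h : ℤ => -h) ?_ ?_ ?_ ?_ ?_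
      · intro h hh
        simp only [Finset.mem_filter, Finset.mem_Icc, dvd_neg] at hh ⊢
        exact ⟨⟨by omega, by omega⟩, hh.2⟩
      · intro h hh
        simp only [Finset.mem_filter, Finset.mem_Icc, dvd_neg] at hh ⊢
        exact ⟨⟨by omega, by omega⟩, hh.2⟩
      · intro h _; simp
      · intro h _; simp
      · intro h _
        exact (hBneg h).symm
    have hposnat : ∑ h ∈ (Finset.Icc (1:ℤ) ((N:ℤ)-1)).filter (fun h => ¬ (q:ℤ) ∣ h), B h
        = ∑ h ∈ (Finset.Ico 1 N).filter (fun h => ¬ (q ∣ h)),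
            2 / ‖1 - e ((k : ℝ) * (h:ℕ) / N)‖ := by
      refine Finset.sum_nbij' (i := fun h : ℤ => h.toNat) (j := fun h : ℕ => (h:ℤ)) ?_ ?_ ?_ ?_ ?_
      · intro h hh
        simp only [Finset.mem_filter, Finset.mem_Icc] at hh
        obtain ⟨⟨h1, h2⟩, h3⟩ := hh
        simp only [Finset.mem_filter, Finset.mem_Ico]
        refine ⟨⟨by omega, by omega⟩, ?_⟩
        intro hc
        apply h3
        have : (q:ℤ) ∣ (h.toNat : ℤ) := Int.natCast_dvd_natCast.mpr hc
        rwa [Int.toNat_of_nonneg (by omega)] at this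
      · intro h hh
        simp only [Finset.mem_filter, Finset.mem_Ico] at hh
        obtain ⟨⟨h1, h2⟩, h3⟩ := hh
        simp only [Finset.mem_filter, Finset.mem_Icc]
        refine ⟨⟨by omega, by omega⟩, ?_⟩
        intro hc
        exact h3 (Int.natCast_dvd_natCast.mp hc)
      · intro h hh
        simp only [Finset.mem_filter, Finset.mem_Icc] at hh
        show ((h.toNat : ℕ) : ℤ) = h
        omega
      · intro h _; simp
      · intro h hh
        simp only [Finset.mem_filter, Finset.mem_Icc] at hh
        have hcast : ((h.toNat : ℕ) : ℝ) = ((h : ℤ) : ℝ) := by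
          rw [← Int.cast_natCast, Int.toNat_of_nonneg (by omega)]
        show 2 / ‖1 - z h‖ = 2 / ‖1 - e ((k:ℝ) * ((h.toNat : ℕ):ℝ) / N)‖
        rw [hcast]
    rw [hnegpos, hposnat]
    have hfin : ∀ s : Finset ℕ, ∑ h ∈ s, 2 / ‖1 - e ((k : ℝ) * (h:ℕ) / N)‖
        + ∑ h ∈ s, 2 / ‖1 - e ((k : ℝ) * (h:ℕ) / N)‖
        = 4 * ∑ h ∈ s, 1 / ‖1 - e ((k : ℝ) * (h:ℕ) / N)‖ := by
      intro s
      rw [Finset.mul_sum, ← Finset.sum_add_distrib]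
      refine Finset.sum_congr rfl fun h _ => ?_
      ring
    rw [hfin]
  calc ∑ h ∈ H.filter (fun h => (q:ℤ) ∣ h), A h + ∑ h ∈ H.filter (fun h => ¬ (q:ℤ) ∣ h), A h
      ≤ (N:ℝ) * d + 4 * ∑ h ∈ (Finset.Ico 1 N).filter (fun h => ¬ (q ∣ h)),
          1 / ‖1 - e ((k : ℝ) * (h:ℕ) / N)‖ := add_le_add hdiv hnondiv
    _ = (N : ℝ) * (k.gcd N) + 4 * ∑ h ∈ (Finset.Ico 1 N).filter (fun h => ¬ ((N / k.gcd N) ∣ h)),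
          1 / ‖1 - e ((k : ℝ) * h / N)‖ := by rw [← hd, ← hq]
end

section
/- Fix 0 < ε < 1/32 and 1/4 ≤ v₀ < v₁. Define H'_{ε,v₀,v₁} = { n₊(u)·a(v)·n₋(w) : u ∈ ℝ, v₀ ≤ v ≤ v₁, |w| ≤ ε } ⊂ SL(2,ℝ), where n₊(u) = [[1,u],[0,1]], a(v) = [[v,0],[0,1/v]], n₋(w) = [[1,0],[w,1]]. Then for every γ ∈ SL(2,ℤ) that is not of the form n₊(m) with m ∈ ℤ, we have γ·H'_{ε,v₀,v₁} ∩ H'_{ε,v₀,v₁} = ∅. -/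
open Matrix

noncomputable def np (u : ℝ) : Matrix (Fin 2) (Fin 2) ℝ := !![1, u; 0, 1]
noncomputable def av (v : ℝ) : Matrix (Fin 2) (Fin 2) ℝ := !![v, 0; 0, 1/v]
noncomputable def nm (w : ℝ) : Matrix (Fin 2) (Fin 2) ℝ := !![1, 0; w, 1]

/-- The thickened section of the horocycle. -/
def Hsec (ε v₀ v₁ : ℝ) : Set (Matrix (Fin 2) (Fin 2) ℝ) :=
  {g | ∃ u v w : ℝ, v₀ ≤ v ∧ v ≤ v₁ ∧ |w| ≤ ε ∧ g = np u * av v * nm w}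

private lemma aux_clt (ε v₀ v c t : ℝ) (hε0 : 0 < ε) (hε : ε < 1/32)
    (hv0 : 1/4 ≤ v₀) (hvl : v₀ ≤ v) (hvpos : 0 < v)
    (hcabs : |c| * v ^ 2 ≤ 2 * ε * t) (htb : t * v₀ ≤ v) : |c| < 1 := by
  have hvv0 : 1/16 ≤ v * v₀ := by
    nlinarith [mul_nonneg (by linarith : (0:ℝ) ≤ v₀ - 1/4) (by linarith : (0:ℝ) ≤ v₀ + 1/4),
      mul_nonneg (by linarith : (0:ℝ) ≤ v₀) (by linarith : (0:ℝ) ≤ v - v₀)]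
  have hA : |c| * v ^ 2 * v₀ ≤ 2 * ε * t * v₀ :=
    mul_le_mul_of_nonneg_right hcabs (by linarith)
  have hB : 2 * ε * (t * v₀) ≤ 2 * ε * v :=
    mul_le_mul_of_nonneg_left htb (by positivity)
  have hvv : v / 16 ≤ v ^ 2 * v₀ := by
    have := mul_le_mul_of_nonneg_left hvv0 hvpos.le
    nlinarith
  have h4 : |c| * (v / 16) ≤ |c| * (v ^ 2 * v₀) :=
    mul_le_mul_of_nonneg_left hvv (abs_nonneg c)
  have h5 : 2 * ε * v < v / 16 := by nlinarith
  have h6 : |c| * (v / 16) < 1 * (v / 16) := by nlinarith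
  exact lt_of_mul_lt_mul_right h6 (by linarith)

/-- Only the integer upper-triangular unipotent elements of `SL(2,ℤ)` return the
thickened section to itself. -/
theorem section_disjoint (ε v₀ v₁ : ℝ) (hε0 : 0 < ε) (hε : ε < 1/32)
    (hv0 : 1/4 ≤ v₀) (hv : v₀ < v₁) (γ : Matrix (Fin 2) (Fin 2) ℤ)
    (hdet : γ.det = 1) (hγ : ¬ ∃ m : ℤ, γ = !![1, m; 0, 1]) :
    ∀ g ∈ Hsec ε v₀ v₁, (γ.map (Int.cast : ℤ → ℝ)) * g ∉ Hsec ε v₀ v₁ := by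
  rintro g ⟨u, v, w, hvl, hvr, hw, rfl⟩ ⟨u', v', w', hvl', hvr', hw', heq⟩
  have hvpos : 0 < v := by linarith
  have hv'pos : 0 < v' := by linarith
  have hvne : v ≠ 0 := ne_of_gt hvpos
  have hv'ne : v' ≠ 0 := ne_of_gt hv'pos
  have h11 := congrFun (congrFun heq 1) 1
  have h10 := congrFun (congrFun heq 1) 0
  simp [np, av, nm, Matrix.mul_apply, Fin.sum_univ_two, Matrix.map_apply] at h11 h10
  obtain ⟨c, hc⟩ : ∃ x : ℝ, ((γ 1 0 : ℤ) : ℝ) = x := ⟨_, rfl⟩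
  obtain ⟨d, hd⟩ : ∃ x : ℝ, ((γ 1 1 : ℤ) : ℝ) = x := ⟨_, rfl⟩
  rw [hc, hd] at h11 h10
  clear heq
  obtain ⟨t, htdef⟩ : ∃ x : ℝ, c * u + d = x := ⟨_, rfl⟩
  have ht : t * v' = v := by
    field_simp at h11
    nlinarith [h11]
  have htpos : 0 < t := by nlinarith [ht]
  have key : c * v ^ 2 + t * w = t * w' := by
    field_simp at h10
    refine mul_right_cancel₀ hv'ne ?_
    calc (c * v ^ 2 + t * w) * v' = (c * (v * v + u * w) + d * w) * v' := by
          rw [← htdef]; ring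
      _ = w' * v := by linear_combination h10
      _ = w' * (t * v') := by rw [ht]
      _ = t * w' * v' := by ring
  have htb : t * v₀ ≤ v := by
    calc t * v₀ ≤ t * v' := by nlinarith
    _ = v := ht
  have hwabs : -ε ≤ w ∧ w ≤ ε := abs_le.mp hw
  have hwabs' : -ε ≤ w' ∧ w' ≤ ε := abs_le.mp hw'
  have ht1 : t * w' ≤ t * ε := mul_le_mul_of_nonneg_left hwabs'.2 htpos.le
  have ht2 : -(t * ε) ≤ t * w := by nlinarith [hwabs.1]
  have ht3 : t * w ≤ t * ε := mul_le_mul_of_nonneg_left hwabs.2 htpos.le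
  have ht4 : -(t * ε) ≤ t * w' := by nlinarith [hwabs'.1]
  have hcabs : |c| * v ^ 2 ≤ 2 * ε * t := by
    rcases abs_cases c with ⟨h1, h2⟩ | ⟨h1, h2⟩ <;> rw [h1] <;> linarith [key]
  have hclt : |c| < 1 := aux_clt ε v₀ v c t hε0 hε hv0 hvl hvpos hcabs htb
  have hc0 : γ 1 0 = 0 := by
    rw [← hc] at hclt
    have h2 : |γ 1 0| < 1 := by
      rw [← Int.cast_abs] at hclt
      exact_mod_cast hclt
    rw [abs_lt] at h2
    omega
  have hdpos : (0:ℤ) < γ 1 1 := by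
    have hcz : c = 0 := by rw [← hc, hc0]; simp
    have hd' : (0:ℝ) < d := by rw [← htdef, hcz] at htpos; linarith
    rw [← hd] at hd'
    exact_mod_cast hd'
  rw [Matrix.det_fin_two, hc0] at hdet
  have h1 : γ 0 0 * γ 1 1 = 1 := by linarith [hdet]
  have h2 : γ 1 1 = 1 ∧ γ 0 0 = 1 := by
    rcases Int.mul_eq_one_iff_eq_one_or_neg_one.mp h1 with ⟨ha, hb⟩ | ⟨ha, hb⟩
    · exact ⟨hb, ha⟩
    · omega
  exact hγ ⟨γ 0 1, by
    ext i j
    fin_cases i <;> fin_cases j <;> simp [h2.1, h2.2, hc0]⟩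
end

section
/- Under the change of variables x = u + wv²/(1+w²), y = v²/(1+w²), φ = arctan(w) (with v > 0, u, w ∈ ℝ), one has n₊(x)·a(√y)·r(φ) = n₊(u)·a(v)·n₋(w) in SL(2,ℝ), and the Jacobian determinant ∂(x,y,φ)/∂(u,v,w) equals 2v/(1+w²)² = 2y²·v^{−3}. -/
open Matrix

noncomputable def rot (φ : ℝ) : Matrix (Fin 2) (Fin 2) ℝ :=
  !![Real.cos φ, -Real.sin φ; Real.sin φ, Real.cos φ]

/-- The change of variables from section coordinates `(u,v,w)` to Iwasawa
coordinates `(x,y,φ)`. -/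
noncomputable def iwasawaOfSection : ℝ × ℝ × ℝ → ℝ × ℝ × ℝ :=
  fun p => (p.1 + p.2.2 * p.2.1 ^ 2 / (1 + p.2.2 ^ 2),
            p.2.1 ^ 2 / (1 + p.2.2 ^ 2), Real.arctan p.2.2)

/-!
The Iwasawa decomposition of `n₋(w)` is `n₊(w/(1+w²)) a((1+w²)^(-1/2)) r(arctan w)`, as one reads
off from `n₋(w)·i = (w + i)/(1+w²)`; moving `n₊(v²t)` past `a(v)` turns it into `n₊(t)`, which
gives the group identity. The change of variables is block triangular (`x - u`, `y` depend only on
`(v, w)` and `φ` only on `w`), so its Jacobian is `∂x/∂u · ∂y/∂v · dφ/dw = 1 · 2v/(1+w²) · 1/(1+w²)`.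
-/

theorem np_add (a b : ℝ) : np (a + b) = np a * np b := by
  ext i j; fin_cases i <;> fin_cases j <;> simp [np, add_comm]

theorem av_mul (a b : ℝ) : av (a * b) = av a * av b := by
  ext i j; fin_cases i <;> fin_cases j <;> simp [av, mul_comm]

theorem np_mul_av {v : ℝ} (hv : v ≠ 0) (t : ℝ) : np (v ^ 2 * t) * av v = av v * np t := by
  ext i j; fin_cases i <;> fin_cases j <;> simp [np, av]
  field_simp

theorem rot_arctan (w : ℝ) :
    rot (Real.arctan w) = (1 / √(1 + w ^ 2)) • !![1, -w; w, 1] := by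
  ext i j; fin_cases i <;> fin_cases j <;>
    simp [rot, Real.cos_arctan, Real.sin_arctan, div_eq_inv_mul]

theorem np_mul_av_mul_rot_arctan (w : ℝ) :
    np (w / (1 + w ^ 2)) * av (1 / √(1 + w ^ 2)) * rot (Real.arctan w) = nm w := by
  have hpos : 0 < 1 + w ^ 2 := by positivity
  have hsq : √(1 + w ^ 2) ^ 2 = 1 + w ^ 2 := Real.sq_sqrt hpos.le
  have hs : √(1 + w ^ 2) ≠ 0 := (Real.sqrt_pos.2 hpos).ne'
  rw [rot_arctan]
  ext i j; fin_cases i <;> fin_cases j <;>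
    simp [np, av, nm, Matrix.mul_apply, Fin.sum_univ_two] <;> field_simp <;> simp only [hsq] <;> ring

theorem np_mul_av_sqrt_mul_rot_arctan {v : ℝ} (hv : 0 < v) (u w : ℝ) :
    np (u + w * v ^ 2 / (1 + w ^ 2)) * av √(v ^ 2 / (1 + w ^ 2)) * rot (Real.arctan w)
      = np u * av v * nm w := by
  have hx : u + w * v ^ 2 / (1 + w ^ 2) = u + v ^ 2 * (w / (1 + w ^ 2)) := by ring
  have hy : √(v ^ 2 / (1 + w ^ 2)) = v * (1 / √(1 + w ^ 2)) := by
    rw [Real.sqrt_div' _ (by positivity), Real.sqrt_sq hv.le, mul_one_div]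
  rw [hx, hy, np_add, av_mul]
  calc np u * np (v ^ 2 * (w / (1 + w ^ 2))) * (av v * av (1 / √(1 + w ^ 2)))
        * rot (Real.arctan w)
      = np u * (np (v ^ 2 * (w / (1 + w ^ 2))) * av v) * av (1 / √(1 + w ^ 2))
        * rot (Real.arctan w) := by simp only [mul_assoc]
    _ = np u * av v * (np (w / (1 + w ^ 2)) * av (1 / √(1 + w ^ 2)) * rot (Real.arctan w)) := by
        rw [np_mul_av hv.ne']; simp only [mul_assoc]
    _ = np u * av v * nm w := by rw [np_mul_av_mul_rot_arctan]

theorem LinearMap.det_prod_comp_snd {R M : Type*} [CommRing R] [AddCommGroup M] [Module R M]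
    [Module.Free R M] [Module.Finite R M] (φ : R × M →ₗ[R] R) (f : M →ₗ[R] M) :
    (φ.prod (f ∘ₗ LinearMap.snd R R M)).det = φ (1, 0) * f.det := by
  classical
  let b := Module.Free.chooseBasis R M
  let e := (Module.Basis.singleton Unit R).prod b
  rw [← LinearMap.det_toMatrix e, ← LinearMap.det_toMatrix b]
  have : LinearMap.toMatrix e e (φ.prod (f ∘ₗ LinearMap.snd R R M)) =
      Matrix.fromBlocks (Matrix.of fun _ _ => φ (1, 0)) (Matrix.of fun _ i => φ (0, b i)) 0
        (LinearMap.toMatrix b b f) := by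
    ext (i | i) (j | j) <;> simp [e, LinearMap.toMatrix_apply]
  rw [this, Matrix.det_fromBlocks_zero₂₁, Matrix.det_unique]
  rfl

theorem det_fderiv_eq_deriv {𝕜 : Type*} [NontriviallyNormedField 𝕜] (f : 𝕜 → 𝕜) (x : 𝕜) :
    LinearMap.det (fderiv 𝕜 f x).toLinearMap = deriv f x :=
  LinearMap.det_ring _

theorem det_fderiv_prodMk_comp_snd {𝕜 E : Type*} [NontriviallyNormedField 𝕜]
    [NormedAddCommGroup E] [NormedSpace 𝕜 E] [FiniteDimensional 𝕜 E]
    {φ : 𝕜 × E → 𝕜} {g : E → E} {p : 𝕜 × E}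
    (hφ : DifferentiableAt 𝕜 φ p) (hg : DifferentiableAt 𝕜 g p.2) :
    LinearMap.det (fderiv 𝕜 (fun q => (φ q, g q.2)) p).toLinearMap
      = deriv (fun t => φ (t, p.2)) p.1 * LinearMap.det (fderiv 𝕜 g p.2).toLinearMap := by
  have hF : HasFDerivAt (fun q => (φ q, g q.2))
      ((fderiv 𝕜 φ p).prod ((fderiv 𝕜 g p.2).comp (ContinuousLinearMap.snd 𝕜 𝕜 E))) p :=
    hφ.hasFDerivAt.prodMk (hg.hasFDerivAt.comp p hasFDerivAt_snd)
  have hpartial : HasDerivAt (fun t => φ (t, p.2)) (fderiv 𝕜 φ p (1, 0)) p.1 :=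
    hφ.hasFDerivAt.comp_hasDerivAt p.1 ((hasDerivAt_id p.1).prodMk (hasDerivAt_const p.1 p.2))
  rw [hF.fderiv, hpartial.deriv]
  exact LinearMap.det_prod_comp_snd _ _

theorem det_fderiv_iwasawaOfSection (u v w : ℝ) :
    LinearMap.det (fderiv ℝ iwasawaOfSection (u, v, w)).toLinearMap
      = 2 * v / (1 + w ^ 2) ^ 2 := by
  have hdiff_yφ : DifferentiableAt ℝ
      (fun q : ℝ × ℝ => (q.1 ^ 2 / (1 + q.2 ^ 2), Real.arctan q.2)) (v, w) :=
    (by fun_prop (disch := positivity) : DifferentiableAt ℝ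
      (fun q : ℝ × ℝ => q.1 ^ 2 / (1 + q.2 ^ 2)) (v, w)).prodMk differentiableAt_snd.arctan
  calc LinearMap.det (fderiv ℝ iwasawaOfSection (u, v, w)).toLinearMap
      = deriv (fun t => t + w * v ^ 2 / (1 + w ^ 2)) u * LinearMap.det (fderiv ℝ
          (fun q : ℝ × ℝ => (q.1 ^ 2 / (1 + q.2 ^ 2), Real.arctan q.2)) (v, w)).toLinearMap :=
        det_fderiv_prodMk_comp_snd (p := (u, v, w))
          (φ := fun q : ℝ × ℝ × ℝ => q.1 + q.2.2 * q.2.1 ^ 2 / (1 + q.2.2 ^ 2))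
          (by fun_prop (disch := positivity)) hdiff_yφ
    _ = deriv (fun t => t + w * v ^ 2 / (1 + w ^ 2)) u
          * (deriv (fun t => t ^ 2 / (1 + w ^ 2)) v * deriv Real.arctan w) := by
        rw [det_fderiv_prodMk_comp_snd (by fun_prop (disch := positivity))
          Real.differentiable_arctan.differentiableAt, det_fderiv_eq_deriv]
    _ = 2 * v / (1 + w ^ 2) ^ 2 := by
        simp [Real.deriv_arctan]
        field_simp

/-- Under `x = u + wv²/(1+w²)`, `y = v²/(1+w²)`, `φ = arctan w`, one has
`n₊(x)a(√y)r(φ) = n₊(u)a(v)n₋(w)`, and the Jacobian determinant equals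
`2v/(1+w²)² = 2y²v^{−3}`. -/
theorem iwasawa_section_change_of_variables (u v w : ℝ) (hv : 0 < v) :
    (np (u + w * v ^ 2 / (1 + w ^ 2))
        * av (Real.sqrt (v ^ 2 / (1 + w ^ 2))) * rot (Real.arctan w)
      = np u * av v * nm w)
    ∧ LinearMap.det ((fderiv ℝ iwasawaOfSection (u, v, w)).toLinearMap)
        = 2 * v / (1 + w ^ 2) ^ 2
    ∧ 2 * v / (1 + w ^ 2) ^ 2 = 2 * (v ^ 2 / (1 + w ^ 2)) ^ 2 * v ^ (-3 : ℤ) := by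
  refine ⟨np_mul_av_sqrt_mul_rot_arctan hv u w, det_fderiv_iwasawaOfSection u v w, ?_⟩
  rw [_root_.zpow_neg, zpow_ofNat]
  field_simp
end
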